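/- arXiv:1401.2262 — 3 statements merged into one kernel-verified Lean document; each statement's English description precedes it below -/
import Mathlib

section
/- Let d ≥ 1 be an integer, let m, r ≥ 0, p > 1 and t ∈ (0,1] be real numbers, and assume either (i) p > m−1 and β := p+1−m, or (ii) r > m−2 and β := (r+2−m)/2; assume moreover m+β−2 > 0. Let 0 < ε < δ < 1/β, α > 0, and define W(s,x) = exp(ε(t−s)^α‖x‖^β). Then for every constant C ≥ 1 there exists a constant C̃ > 0 such that for every s ∈ (0,t) and every x ∈ ℝ^d with 1 ≤ ‖x‖ ≤ C(t−s)^{−1/(m+β−2)} one has ∂_s W(s,x) − [ (1+‖x‖^m)·Δ_x W(s,x) − ‖x‖^{p−1}·⟨x, ∇_x W(s,x)⟩ − ‖x‖^r·W(s,x) ] ≥ −C̃ (t−s)^{α−1−β/(m+β−2)} W(s,x). -/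
open RealInnerProductSpace Filter MeasureTheory
open scoped BigOperators

/-- The `i`-th partial derivative of `f : ℝ^d → ℝ`. -/
noncomputable def pderiv' {d : ℕ} (f : EuclideanSpace ℝ (Fin d) → ℝ) (i : Fin d)
    (x : EuclideanSpace ℝ (Fin d)) : ℝ :=
  fderiv ℝ f x (EuclideanSpace.single i 1)

/-- The Laplacian (sum of second partial derivatives) of `f : ℝ^d → ℝ`. -/
noncomputable def laplacian' {d : ℕ} (f : EuclideanSpace ℝ (Fin d) → ℝ)
    (x : EuclideanSpace ℝ (Fin d)) : ℝ :=
  ∑ i, pderiv' (pderiv' f i) i x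

open Topology

/-!
For fixed `s`, `W s = ψ ∘ ‖·‖` with `ψ ρ = exp (a ρ ^ β)` and `a = ε (t - s) ^ α`. For a radial
function `⟪x, ∇W⟫ = ρ ψ' ρ ≥ 0` and `ΔW = ψ'' ρ + (d - 1) ψ' ρ / ρ`, which here is
`W (a β (d + β - 2) ρ ^ (β - 2) + (a β) ^ 2 ρ ^ (2β - 2))`. Hence the drift and potential terms have
a favourable sign, and what remains is a sum of monomials `τ ^ e ρ ^ γ W` with `τ = t - s`. On the
region `ρ ≤ C τ ^ (-1/κ)`, `κ = m + β - 2`, such a monomial is at most `C ^ γ τ ^ (e - γ/κ) W`;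
after `1 + ρ ^ m ≤ 2 ρ ^ m`, each of the three exponents `e - γ/κ` is at least
`α - 1 - β/κ`, and `τ ≤ 1` finishes.
-/

theorem Real.hasDerivAt_exp_mul_rpow (a β : ℝ) {r : ℝ} (hr : r ≠ 0) :
    HasDerivAt (fun r => Real.exp (a * r ^ β))
      (Real.exp (a * r ^ β) * (a * β * r ^ (β - 1))) r := by
  convert (((Real.hasDerivAt_rpow_const (p := β) (Or.inl hr)).const_mul a).exp) using 1
  ring

section Radial

variable {E : Type*} [NormedAddCommGroup E] [InnerProductSpace ℝ E] {x : E}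

theorem hasFDerivAt_norm_of_ne_zero (hx : x ≠ 0) :
    HasFDerivAt (fun y : E => ‖y‖) (‖x‖⁻¹ • innerSL ℝ x) x := by
  have h := (hasStrictFDerivAt_norm_sq x).hasFDerivAt.sqrt (by positivity)
  simp only [Real.sqrt_sq (norm_nonneg _)] at h
  refine h.congr_fderiv ?_
  rw [← Nat.cast_smul_eq_nsmul ℝ, smul_smul]
  congr 1
  field_simp
  norm_num

theorem hasFDerivAt_comp_norm {ψ : ℝ → ℝ} {ψ' : ℝ} (hx : x ≠ 0) (hψ : HasDerivAt ψ ψ' ‖x‖) :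
    HasFDerivAt (fun y : E => ψ ‖y‖) ((ψ' / ‖x‖) • innerSL ℝ x) x := by
  refine (hψ.comp_hasFDerivAt x (hasFDerivAt_norm_of_ne_zero hx)).congr_fderiv ?_
  rw [smul_smul, div_eq_mul_inv]

theorem gradient_comp_norm [CompleteSpace E] {ψ : ℝ → ℝ} {ψ' : ℝ} (hx : x ≠ 0)
    (hψ : HasDerivAt ψ ψ' ‖x‖) :
    gradient (fun y : E => ψ ‖y‖) x = (ψ' / ‖x‖) • x := by
  refine HasGradientAt.gradient ?_
  rw [hasGradientAt_iff_hasFDerivAt, map_smul]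
  exact hasFDerivAt_comp_norm hx hψ

theorem inner_gradient_comp_norm [CompleteSpace E] {ψ : ℝ → ℝ} {ψ' : ℝ} (hx : x ≠ 0)
    (hψ : HasDerivAt ψ ψ' ‖x‖) :
    ⟪x, gradient (fun y : E => ψ ‖y‖) x⟫ = ψ' * ‖x‖ := by
  rw [gradient_comp_norm hx hψ, inner_smul_right, real_inner_self_eq_norm_sq]
  field_simp [norm_ne_zero_iff.mpr hx]

end Radial

section Euclidean

variable {d : ℕ} {x : EuclideanSpace ℝ (Fin d)}

theorem pderiv'_comp_norm {ψ : ℝ → ℝ} {ψ' : ℝ} (hx : x ≠ 0) (hψ : HasDerivAt ψ ψ' ‖x‖)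
    (i : Fin d) : pderiv' (fun y => ψ ‖y‖) i x = ψ' / ‖x‖ * x i := by
  rw [pderiv', (hasFDerivAt_comp_norm hx hψ).fderiv]
  simp [EuclideanSpace.inner_single_right]

theorem laplacian'_comp_norm {ψ ψ' : ℝ → ℝ} {ψ'' : ℝ} (hx : x ≠ 0)
    (hψ : ∀ᶠ r in 𝓝 ‖x‖, HasDerivAt ψ (ψ' r) r) (hψ' : HasDerivAt ψ' ψ'' ‖x‖) :
    laplacian' (fun y => ψ ‖y‖) x = ψ'' + (d - 1) * (ψ' ‖x‖ / ‖x‖) := by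
  have hx₀ : ‖x‖ ≠ 0 := norm_ne_zero_iff.mpr hx
  have hχ : HasDerivAt (fun r => ψ' r / r) ((ψ'' * ‖x‖ - ψ' ‖x‖ * 1) / ‖x‖ ^ 2) ‖x‖ :=
    hψ'.div (hasDerivAt_id _) hx₀
  have hsecond (i : Fin d) : pderiv' (pderiv' (fun y => ψ ‖y‖) i) i x
      = (ψ'' * ‖x‖ - ψ' ‖x‖ * 1) / ‖x‖ ^ 2 / ‖x‖ * x i * x i + ψ' ‖x‖ / ‖x‖ := by
    have hfirst : pderiv' (fun y => ψ ‖y‖) i =ᶠ[𝓝 x] fun y => ψ' ‖y‖ / ‖y‖ * y i := by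
      filter_upwards [(continuous_norm.tendsto x).eventually hψ, isOpen_ne.mem_nhds hx]
        with y hy hy₀
      exact pderiv'_comp_norm hy₀ hy i
    have hprod : HasFDerivAt (fun y : EuclideanSpace ℝ (Fin d) => ψ' ‖y‖ / ‖y‖ * y i) _ x :=
      (hasFDerivAt_comp_norm hx hχ).fun_mul (EuclideanSpace.proj (𝕜 := ℝ) i).hasFDerivAt
    rw [pderiv', hfirst.fderiv_eq, hprod.fderiv]
    simp [EuclideanSpace.inner_single_right]
    ring
  have hnorm : ∑ i, x i * x i = ‖x‖ ^ 2 := by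
    rw [EuclideanSpace.real_norm_sq_eq]
    simp only [sq]
  rw [laplacian', Finset.sum_congr rfl fun i _ => hsecond i, Finset.sum_add_distrib,
    Finset.sum_const, Finset.card_univ, Fintype.card_fin, nsmul_eq_mul]
  simp only [mul_assoc, ← Finset.mul_sum, hnorm]
  field_simp
  ring

theorem laplacian'_exp_mul_norm_rpow (a β : ℝ) (hx : x ≠ 0) :
    laplacian' (fun y => Real.exp (a * ‖y‖ ^ β)) x = Real.exp (a * ‖x‖ ^ β) *
      (a * β * (d + β - 2) * ‖x‖ ^ (β - 2) + (a * β) ^ 2 * ‖x‖ ^ (2 * β - 2)) := by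
  have hR : ‖x‖ ≠ 0 := norm_ne_zero_iff.mpr hx
  have hψ' := (Real.hasDerivAt_exp_mul_rpow a β hR).mul
    ((Real.hasDerivAt_rpow_const (p := β - 1) (Or.inl hR)).const_mul (a * β))
  rw [laplacian'_comp_norm hx ((eventually_ne_nhds hR).mono
    fun r hr => Real.hasDerivAt_exp_mul_rpow a β hr) hψ']
  have h₁ : ‖x‖ ^ (β - 1) * ‖x‖ ^ (β - 1) = ‖x‖ ^ (2 * β - 2) := by
    rw [← Real.rpow_add (norm_pos_iff.mpr hx)]
    ring_nf
  have h₂ : ‖x‖ ^ (β - 1) / ‖x‖ = ‖x‖ ^ (β - 2) := by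
    rw [← Real.rpow_sub_one hR]
    ring_nf
  rw [show β - 1 - 1 = β - 2 by ring, ← h₁, ← h₂]
  ring

end Euclidean

theorem Real.hasDerivAt_exp_mul_sub_rpow_mul (ε α t K : ℝ) {s : ℝ} (hs : s ≠ t) :
    HasDerivAt (fun u => Real.exp (ε * (t - u) ^ α * K))
      (Real.exp (ε * (t - s) ^ α * K) * -(ε * α * (t - s) ^ (α - 1) * K)) s := by
  have hts : t - s ≠ 0 := sub_ne_zero.mpr hs.symm
  convert ((((hasDerivAt_id' s).const_sub t).rpow_const (p := α) (Or.inl hts)).const_mul ε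
    |>.mul_const K).exp using 1
  ring

theorem rpow_mul_rpow_le_of_le_mul_rpow {τ R C κ γ e e' : ℝ} (hτ₀ : 0 < τ) (hτ₁ : τ ≤ 1)
    (hR : 0 ≤ R) (hC : 0 ≤ C) (hγ : 0 ≤ γ) (hRC : R ≤ C * τ ^ (-(1 / κ)))
    (he : e' ≤ e - γ / κ) : τ ^ e * R ^ γ ≤ C ^ γ * τ ^ e' := by
  have hRγ : R ^ γ ≤ C ^ γ * τ ^ (-(γ / κ)) := calc
    R ^ γ ≤ (C * τ ^ (-(1 / κ))) ^ γ := Real.rpow_le_rpow hR hRC hγ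
    _ = C ^ γ * τ ^ (-(γ / κ)) := by
      rw [Real.mul_rpow hC (by positivity), ← Real.rpow_mul hτ₀.le]
      ring_nf
  calc τ ^ e * R ^ γ ≤ τ ^ e * (C ^ γ * τ ^ (-(γ / κ))) := by gcongr
    _ = C ^ γ * τ ^ (e - γ / κ) := by
      rw [sub_eq_add_neg, Real.rpow_add hτ₀]
      ring
    _ ≤ C ^ γ * τ ^ e' :=
      mul_le_mul_of_nonneg_left (Real.rpow_le_rpow_of_exponent_ge hτ₀ hτ₁ he) (by positivity)

theorem one_add_rpow_mul_rpow_le {R m γ : ℝ} (hR : 1 ≤ R) (hm : 0 ≤ m) :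
    (1 + R ^ m) * R ^ γ ≤ 2 * R ^ (m + γ) := by
  have hRm : 1 ≤ R ^ m := Real.one_le_rpow hR hm
  rw [Real.rpow_add (by linarith)]
  nlinarith [Real.rpow_nonneg (zero_le_one.trans hR) γ]

theorem exists_lyapunov_bound (D : ℝ) {m α β ε C : ℝ} (hm : 0 ≤ m) (hα : 0 ≤ α) (hβ : 0 < β)
    (hκ : 0 < m + β - 2) (hε : 0 < ε) (hC : 0 < C) :
    ∃ K > 0, ∀ τ ∈ Set.Ioc (0 : ℝ) 1, ∀ R : ℝ, 1 ≤ R → R ≤ C * τ ^ (-(1 / (m + β - 2))) →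
      ε * α * τ ^ (α - 1) * R ^ β + (1 + R ^ m) * (ε * τ ^ α * β * (D + β - 2) * R ^ (β - 2)
        + (ε * τ ^ α * β) ^ 2 * R ^ (2 * β - 2)) ≤ K * τ ^ (α - 1 - β / (m + β - 2)) := by
  set κ := m + β - 2
  refine ⟨ε * α * C ^ β + 2 * ε * β * |D + β - 2| * C ^ κ + 2 * (ε * β) ^ 2 * C ^ (κ + β),
    by positivity, ?_⟩
  rintro τ ⟨hτ₀, hτ₁⟩ R hR hRC
  set e := α - 1 - β / κ
  have hbound {γ e₀ : ℝ} (hγ : 0 ≤ γ) (he : e ≤ e₀ - γ / κ) : τ ^ e₀ * R ^ γ ≤ C ^ γ * τ ^ e :=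
    rpow_mul_rpow_le_of_le_mul_rpow hτ₀ hτ₁ (by linarith) hC.le hγ hRC he
  have hβκ : 0 ≤ β / κ := by positivity
  have h₁ : τ ^ (α - 1) * R ^ β ≤ C ^ β * τ ^ e := hbound hβ.le le_rfl
  have h₂ : τ ^ α * R ^ κ ≤ C ^ κ * τ ^ e :=
    hbound hκ.le (by rw [div_self hκ.ne']; linarith)
  have h₃ : τ ^ (2 * α) * R ^ (κ + β) ≤ C ^ (κ + β) * τ ^ e :=
    hbound (by linarith) (by rw [add_div, div_self hκ.ne']; linarith)
  have hτ2 : (τ ^ α) ^ 2 = τ ^ (2 * α) := by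
    rw [← Real.rpow_natCast, ← Real.rpow_mul hτ₀.le]
    ring_nf
  have hk₂ : (1 + R ^ m) * R ^ (β - 2) ≤ 2 * R ^ κ := by
    have := one_add_rpow_mul_rpow_le (γ := β - 2) hR hm
    rwa [show m + (β - 2) = κ by ring] at this
  have hk₃ : (1 + R ^ m) * R ^ (2 * β - 2) ≤ 2 * R ^ (κ + β) := by
    have := one_add_rpow_mul_rpow_le (γ := 2 * β - 2) hR hm
    rwa [show m + (2 * β - 2) = κ + β by ring] at this
  calc _ = ε * α * (τ ^ (α - 1) * R ^ β)
        + ε * β * (D + β - 2) * (τ ^ α * ((1 + R ^ m) * R ^ (β - 2)))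
        + (ε * β) ^ 2 * (τ ^ (2 * α) * ((1 + R ^ m) * R ^ (2 * β - 2))) := by
          rw [← hτ2]
          ring
    _ ≤ ε * α * (τ ^ (α - 1) * R ^ β) + ε * β * |D + β - 2| * (τ ^ α * (2 * R ^ κ))
        + (ε * β) ^ 2 * (τ ^ (2 * α) * (2 * R ^ (κ + β))) := by
          gcongr ε * α * _ + ε * β * ?_ * (_ * ?_) + _ * (_ * ?_)
          exact le_abs_self _
    _ = ε * α * (τ ^ (α - 1) * R ^ β) + 2 * ε * β * |D + β - 2| * (τ ^ α * R ^ κ)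
        + 2 * (ε * β) ^ 2 * (τ ^ (2 * α) * R ^ (κ + β)) := by ring
    _ ≤ ε * α * (C ^ β * τ ^ e) + 2 * ε * β * |D + β - 2| * (C ^ κ * τ ^ e)
        + 2 * (ε * β) ^ 2 * (C ^ (κ + β) * τ ^ e) := by gcongr
    _ = _ := by ring

theorem time_dep_lyapunov_case2_general (d : ℕ) (m r p t β ε α : ℝ)
    (hm : 0 ≤ m) (ht1 : t ≤ 1)
    (hcase : (p > m - 1 ∧ β = p + 1 - m) ∨ (r > m - 2 ∧ β = (r + 2 - m) / 2))
    (hmβ : 0 < m + β - 2)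
    (hε : 0 < ε) (hα : 0 < α)
    (W : ℝ → EuclideanSpace ℝ (Fin d) → ℝ)
    (hW : ∀ s x, W s x = Real.exp (ε * (t - s) ^ α * ‖x‖ ^ β)) :
    ∀ C : ℝ, 1 ≤ C →
      ∃ Ctilde : ℝ, 0 < Ctilde ∧
        ∀ s ∈ Set.Ioo (0 : ℝ) t, ∀ x : EuclideanSpace ℝ (Fin d),
          1 ≤ ‖x‖ → ‖x‖ ≤ C * (t - s) ^ (-(1 / (m + β - 2))) →
          deriv (fun σ => W σ x) s -
              ((1 + ‖x‖ ^ m) * laplacian' (W s) x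
                - ‖x‖ ^ (p - 1) * ⟪x, gradient (W s) x⟫
                - ‖x‖ ^ r * W s x) ≥
            -Ctilde * (t - s) ^ (α - 1 - β / (m + β - 2)) * W s x := by
  have hβ : 0 < β := by rcases hcase with ⟨h, rfl⟩ | ⟨h, rfl⟩ <;> linarith
  intro C hC
  obtain ⟨K, hK, hbound⟩ := exists_lyapunov_bound d hm hα.le hβ hmβ hε (by linarith)
  refine ⟨K, hK, fun s hs x hx₁ hxC => ?_⟩
  have hτ₀ : 0 < t - s := by linarith [hs.2]
  have hτ : t - s ∈ Set.Ioc 0 1 := ⟨hτ₀, by linarith [hs.1]⟩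
  have hR : ‖x‖ ≠ 0 := by positivity
  have hx : x ≠ 0 := norm_ne_zero_iff.mp hR
  rw [show (fun σ => W σ x) = fun σ => Real.exp (ε * (t - σ) ^ α * ‖x‖ ^ β) from
      funext fun σ => hW σ x,
    (Real.hasDerivAt_exp_mul_sub_rpow_mul ε α t _ hs.2.ne).deriv,
    show W s = fun y => Real.exp (ε * (t - s) ^ α * ‖y‖ ^ β) from funext (hW s),
    laplacian'_exp_mul_norm_rpow _ _ hx,
    inner_gradient_comp_norm hx (Real.hasDerivAt_exp_mul_rpow _ _ hR)]
  have hest := mul_le_mul_of_nonneg_left (hbound _ hτ _ hx₁ hxC)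
    (Real.exp_pos (ε * (t - s) ^ α * ‖x‖ ^ β)).le
  have hdrift : 0 ≤ ‖x‖ ^ (p - 1) * (Real.exp (ε * (t - s) ^ α * ‖x‖ ^ β) *
      (ε * (t - s) ^ α * β * ‖x‖ ^ (β - 1)) * ‖x‖) := by positivity
  have hpotential : 0 ≤ ‖x‖ ^ r * Real.exp (ε * (t - s) ^ α * ‖x‖ ^ β) := by positivity
  linarith

theorem time_dep_lyapunov_case2 (d : ℕ) (hd : 1 ≤ d) (m r p t β ε δ α : ℝ)
    (hm : 0 ≤ m) (hr : 0 ≤ r) (hp : 1 < p) (ht0 : 0 < t) (ht1 : t ≤ 1)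
    (hcase : (p > m - 1 ∧ β = p + 1 - m) ∨ (r > m - 2 ∧ β = (r + 2 - m) / 2))
    (hmβ : 0 < m + β - 2)
    (hε : 0 < ε) (hεδ : ε < δ) (hδ : δ < 1 / β) (hα : 0 < α)
    (W : ℝ → EuclideanSpace ℝ (Fin d) → ℝ)
    (hW : ∀ s x, W s x = Real.exp (ε * (t - s) ^ α * ‖x‖ ^ β)) :
    ∀ C : ℝ, 1 ≤ C →
      ∃ Ctilde : ℝ, 0 < Ctilde ∧
        ∀ s ∈ Set.Ioo (0 : ℝ) t, ∀ x : EuclideanSpace ℝ (Fin d),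
          1 ≤ ‖x‖ → ‖x‖ ≤ C * (t - s) ^ (-(1 / (m + β - 2))) →
          deriv (fun σ => W σ x) s -
              ((1 + ‖x‖ ^ m) * laplacian' (W s) x
                - ‖x‖ ^ (p - 1) * ⟪x, gradient (W s) x⟫
                - ‖x‖ ^ r * W s x) ≥
            -Ctilde * (t - s) ^ (α - 1 - β / (m + β - 2)) * W s x :=
  time_dep_lyapunov_case2_general d m r p t β ε α hm ht1 hcase hmβ hε hα W hW
end

section
/- Let k > 2 be a real number and let α, β, γ ≥ 0 and X ≥ 0 be real numbers satisfying X^k ≤ α X^{k/2} + β X^{k−1} + γ X^{k−2}. Then X ≤ (4/3)β + ((4/3)γ)^{1/2} + ((4/3)α²)^{1/k}. -/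
/-!
Put `a = 4/3 β`, `b = (4/3 γ)^{1/2}`, `c = (4/3 α²)^{1/k}`, so that `β ≤ a`, `γ ≤ b²` and
`α ≤ c^{k/2}`. If `X > a + b + c`, then each of `a, b, c` is at most `X`, hence
`c^{k/2} X^{k/2} ≤ c X^{k-1}` and `b² X^{k-2} ≤ b X^{k-1}` (as `k/2 ≥ 1`), and the hypothesis gives
`X^k ≤ (a + b + c) X^{k-1} < X^k`.
-/

theorem Real.rpow_mul_rpow_sub_le_mul_rpow_sub_one {c X e n : ℝ} (hc : 0 ≤ c) (hcX : c ≤ X)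
    (he : 1 ≤ e) : c ^ e * X ^ (n - e) ≤ c * X ^ (n - 1) := by
  rcases hc.eq_or_lt with rfl | hc
  · simp [Real.zero_rpow (by linarith : e ≠ 0)]
  have hX : 0 < X := hc.trans_le hcX
  calc c ^ e * X ^ (n - e) = c * c ^ (e - 1) * X ^ (n - e) := by
        rw [Real.rpow_sub_one hc.ne']
        field_simp
    _ ≤ c * X ^ (e - 1) * X ^ (n - e) := by gcongr
    _ = c * X ^ (n - 1) := by
        rw [mul_assoc, ← Real.rpow_add hX]
        ring_nf

theorem le_add_add_of_rpow_le {k α β γ a b c X : ℝ} (hk : 2 ≤ k) (ha : 0 ≤ a) (hb : 0 ≤ b)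
    (hc : 0 ≤ c) (hαc : α ≤ c ^ (k / 2)) (hβa : β ≤ a) (hγb : γ ≤ b ^ 2)
    (h : X ^ k ≤ α * X ^ (k / 2) + β * X ^ (k - 1) + γ * X ^ (k - 2)) : X ≤ a + b + c := by
  by_contra! hlt
  have hX : 0 < X := by linarith
  have hc_term : c ^ (k / 2) * X ^ (k / 2) ≤ c * X ^ (k - 1) := by
    simpa only [sub_half] using
      Real.rpow_mul_rpow_sub_le_mul_rpow_sub_one (e := k / 2) (n := k) hc (by linarith) (by linarith)
  have hb_term : b ^ 2 * X ^ (k - 2) ≤ b * X ^ (k - 1) := by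
    simpa only [← Real.rpow_two] using
      Real.rpow_mul_rpow_sub_le_mul_rpow_sub_one (e := 2) (n := k) hb (by linarith) one_le_two
  have : X ^ k < X ^ k :=
    calc X ^ k ≤ α * X ^ (k / 2) + β * X ^ (k - 1) + γ * X ^ (k - 2) := h
      _ ≤ c ^ (k / 2) * X ^ (k / 2) + a * X ^ (k - 1) + b ^ 2 * X ^ (k - 2) := by gcongr
      _ ≤ (a + b + c) * X ^ (k - 1) := by linarith
      _ < X * X ^ (k - 1) := by gcongr
      _ = X ^ k := by rw [← Real.rpow_one_add' hX.le (by linarith)]; ring_nf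
  exact this.false

theorem polynomial_inequality_bound_general (k α β γ X : ℝ) (hk : 2 < k)
    (hβ : 0 ≤ β) (hγ : 0 ≤ γ)
    (h : X ^ k ≤ α * X ^ (k / 2) + β * X ^ (k - 1) + γ * X ^ (k - 2)) :
    X ≤ 4 / 3 * β + (4 / 3 * γ) ^ ((1 : ℝ) / 2) + (4 / 3 * α ^ 2) ^ (1 / k) := by
  refine le_add_add_of_rpow_le hk.le (by positivity) (by positivity) (by positivity) ?_ (by linarith)
    ?_ h
  · rw [← Real.rpow_mul (by positivity), show 1 / k * (k / 2) = 1 / 2 by field_simp,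
      ← Real.sqrt_eq_rpow]
    exact (le_abs_self α).trans (Real.abs_le_sqrt (by linarith [sq_nonneg α]))
  · rw [← Real.sqrt_eq_rpow, Real.sq_sqrt (by positivity)]
    linarith

theorem polynomial_inequality_bound (k α β γ X : ℝ) (hk : 2 < k)
    (hα : 0 ≤ α) (hβ : 0 ≤ β) (hγ : 0 ≤ γ) (hX : 0 ≤ X)
    (h : X ^ k ≤ α * X ^ (k / 2) + β * X ^ (k - 1) + γ * X ^ (k - 2)) :
    X ≤ 4 / 3 * β + (4 / 3 * γ) ^ ((1 : ℝ) / 2) + (4 / 3 * α ^ 2) ^ (1 / k) :=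
  polynomial_inequality_bound_general k α β γ X hk hβ hγ h
end

section
/- Let s < t be real numbers, let h : [s,t] → [0,∞) be Lebesgue integrable, and let ζ : [s,t] → [0,∞) be continuous. Assume that for every τ ∈ [s,t] one has ζ(t) − ζ(τ) ≥ −∫_τ^t h(σ) ζ(σ) dσ. Then ζ(s) ≤ exp( ∫_s^t h(σ) dσ ) · ζ(t). -/
/-!
Put `g τ = ζ t + ∫_τ^t h ζ`, so that `ζ ≤ g` and `g` is antitone. On `[τ, τ']` this gives
`g τ - g τ' = ∫_τ^τ' h ζ ≤ a g τ` with `a = ∫_τ^τ' h`, i.e. `g τ ≤ g τ' / (1 - a)`. For every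
`c > 1` one has `1 / (1 - a) ≤ exp (c a)` once `a` is small, so by continuous induction from `s`
to `t`, `g s ≤ exp (c ∫_s^t h) g t`; let `c → 1`.
-/

open MeasureTheory intervalIntegral

open Set Filter Topology Real

theorem MeasureTheory.IntegrableOn.intervalIntegrable_of_mem_Icc {E : Type*}
    [NormedAddCommGroup E] {μ : Measure ℝ} {f : ℝ → E} {s t a b : ℝ}
    (hf : IntegrableOn f (Icc s t) μ) (ha : a ∈ Icc s t) (hb : b ∈ Icc s t) :
    IntervalIntegrable f μ a b :=
  (hf.mono_set (uIcc_subset_Icc ha hb)).intervalIntegrable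

theorem le_exp_mul_of_le_add_mul {x y a c : ℝ} (hx : 0 ≤ x) (ha : 0 ≤ a) (hc : 0 ≤ c)
    (hac : c * a ≤ c - 1) (h : x ≤ y + a * x) : x ≤ exp (c * a) * y := by
  have h1a : 0 ≤ 1 - a := by nlinarith
  -- `(1 - a) (1 + c a) = 1 + a (c - 1 - c a) ≥ 1`
  have hexp : 1 ≤ (1 - a) * exp (c * a) := by
    nlinarith [mul_le_mul_of_nonneg_left (add_one_le_exp (c * a)) h1a]
  calc x ≤ (1 - a) * exp (c * a) * x := le_mul_of_one_le_left hx hexp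
    _ = exp (c * a) * ((1 - a) * x) := by ring
    _ ≤ exp (c * a) * y := by gcongr; linarith

section ContinuousInduction

variable {g U : ℝ → ℝ} {s t : ℝ}

theorem le_exp_mul_sub_mul_of_le_add_mul {c : ℝ} (hst : s ≤ t) (hc : 1 < c)
    (hg : ContinuousOn g (Icc s t)) (hU : ContinuousOn U (Icc s t))
    (hU_mono : MonotoneOn U (Icc s t)) (hg_nonneg : ∀ τ ∈ Icc s t, 0 ≤ g τ)
    (hstep : ∀ τ ∈ Icc s t, ∀ τ' ∈ Icc s t, τ ≤ τ' → g τ ≤ g τ' + (U τ' - U τ) * g τ) :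
    g s ≤ exp (c * (U t - U s)) * g t := by
  let S := {τ | g s ≤ exp (c * (U τ - U s)) * g τ}
  suffices Icc s t ⊆ S from this (right_mem_Icc.2 hst)
  refine IsClosed.Icc_subset_of_forall_mem_nhdsWithin ?_ (by simp [S]) ?_
  · rw [inter_comm]
    exact ((continuousOn_const.mul (hU.sub continuousOn_const)).rexp.mul hg)
      |>.preimage_isClosed_of_isClosed isClosed_Icc isClosed_Ici
  rintro x ⟨hxS, hx⟩
  have hIcc : Icc s t ∈ 𝓝[>] x := Icc_mem_nhdsGT_of_mem hx
  have hU_near : ∀ᶠ y in 𝓝[>] x, U y < U x + (c - 1) / c :=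
    ((hU x (Ico_subset_Icc_self hx)).mono_left (nhdsWithin_le_of_mem hIcc)).eventually
      (gt_mem_nhds (lt_add_of_pos_right _ (by positivity)))
  filter_upwards [hIcc, hU_near, self_mem_nhdsWithin] with y hy hUy hxy
  have hx' := Ico_subset_Icc_self hx
  have hac : c * (U y - U x) ≤ c - 1 := by
    rw [← le_div_iff₀' (by positivity)]; linarith
  have hxy_step : g x ≤ exp (c * (U y - U x)) * g y :=
    le_exp_mul_of_le_add_mul (hg_nonneg x hx') (sub_nonneg.2 (hU_mono hx' hy (le_of_lt hxy)))
      (by positivity) hac (hstep x hx' y hy (le_of_lt hxy))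
  calc g s ≤ exp (c * (U x - U s)) * g x := hxS
    _ ≤ exp (c * (U x - U s)) * (exp (c * (U y - U x)) * g y) := by gcongr
    _ = exp (c * (U y - U s)) * g y := by rw [← mul_assoc, ← exp_add]; ring_nf

theorem le_exp_sub_mul_of_le_add_mul (hst : s ≤ t)
    (hg : ContinuousOn g (Icc s t)) (hU : ContinuousOn U (Icc s t))
    (hU_mono : MonotoneOn U (Icc s t)) (hg_nonneg : ∀ τ ∈ Icc s t, 0 ≤ g τ)
    (hstep : ∀ τ ∈ Icc s t, ∀ τ' ∈ Icc s t, τ ≤ τ' → g τ ≤ g τ' + (U τ' - U τ) * g τ) :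
    g s ≤ exp (U t - U s) * g t := by
  have hlim : Tendsto (fun c => exp (c * (U t - U s)) * g t) (𝓝[>] 1)
      (𝓝 (exp (U t - U s) * g t)) := by
    have hcont : Continuous fun c => exp (c * (U t - U s)) * g t := by fun_prop
    simpa using (hcont.tendsto 1).mono_left nhdsWithin_le_nhds
  exact ge_of_tendsto hlim <| eventually_nhdsWithin_of_forall fun c hc =>
    le_exp_mul_sub_mul_of_le_add_mul hst hc hg hU hU_mono hg_nonneg hstep

end ContinuousInduction

theorem le_exp_integral_mul_of_le_add_integral_mul {g h : ℝ → ℝ} {s t : ℝ} (hst : s ≤ t)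
    (hh_int : IntegrableOn h (Icc s t)) (hh_nonneg : ∀ σ ∈ Icc s t, 0 ≤ h σ)
    (hg : ContinuousOn g (Icc s t)) (hg_nonneg : ∀ τ ∈ Icc s t, 0 ≤ g τ)
    (hstep : ∀ τ ∈ Icc s t, ∀ τ' ∈ Icc s t, τ ≤ τ' → g τ ≤ g τ' + (∫ σ in τ..τ', h σ) * g τ) :
    g s ≤ exp (∫ σ in s..t, h σ) * g t := by
  have hsub : ∀ τ ∈ Icc s t, ∀ τ' ∈ Icc s t,
      (∫ σ in s..τ', h σ) - ∫ σ in s..τ, h σ = ∫ σ in τ..τ', h σ := fun τ hτ τ' hτ' =>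
    integral_interval_sub_left (hh_int.intervalIntegrable_of_mem_Icc (left_mem_Icc.2 hst) hτ')
      (hh_int.intervalIntegrable_of_mem_Icc (left_mem_Icc.2 hst) hτ)
  have hU : ContinuousOn (fun τ => ∫ σ in s..τ, h σ) (Icc s t) := by
    rw [← uIcc_of_le hst] at hh_int ⊢
    exact continuousOn_primitive_interval hh_int
  have hU_mono : MonotoneOn (fun τ => ∫ σ in s..τ, h σ) (Icc s t) := fun τ hτ τ' hτ' hle => by
    rw [← sub_nonneg, hsub τ hτ τ' hτ']
    exact integral_nonneg hle fun σ hσ => hh_nonneg σ (Icc_subset_Icc hτ.1 hτ'.2 hσ)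
  simpa using le_exp_sub_mul_of_le_add_mul hst hg hU hU_mono hg_nonneg fun τ hτ τ' hτ' hle => by
    simpa only [hsub τ hτ τ' hτ'] using hstep τ hτ τ' hτ' hle

theorem le_add_integral_mul_of_sub_eq_integral {h ζ g : ℝ → ℝ} {s t τ τ' : ℝ}
    (hh_int : IntegrableOn h (Icc s t)) (hhζ : IntegrableOn (fun σ => h σ * ζ σ) (Icc s t))
    (hh_nonneg : ∀ σ ∈ Icc s t, 0 ≤ h σ) (hζ_nonneg : ∀ σ ∈ Icc s t, 0 ≤ ζ σ)
    (hζg : ∀ σ ∈ Icc s t, ζ σ ≤ g σ)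
    (hg : ∀ τ ∈ Icc s t, ∀ τ' ∈ Icc s t, g τ - g τ' = ∫ σ in τ..τ', h σ * ζ σ)
    (hτ : τ ∈ Icc s t) (hτ' : τ' ∈ Icc s t) (hle : τ ≤ τ') :
    g τ ≤ g τ' + (∫ σ in τ..τ', h σ) * g τ := by
  have hsub : Icc τ τ' ⊆ Icc s t := Icc_subset_Icc hτ.1 hτ'.2
  have hg_le : ∀ σ ∈ Icc τ τ', g σ ≤ g τ := fun σ hσ => by
    have hσ_sub : Icc τ σ ⊆ Icc s t := (Icc_subset_Icc_right hσ.2).trans hsub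
    have : 0 ≤ ∫ x in τ..σ, h x * ζ x := integral_nonneg hσ.1 fun x hx =>
      mul_nonneg (hh_nonneg x (hσ_sub hx)) (hζ_nonneg x (hσ_sub hx))
    linarith [hg τ hτ σ (hsub hσ)]
  have hbound : ∫ σ in τ..τ', h σ * ζ σ ≤ ∫ σ in τ..τ', h σ * g τ :=
    integral_mono_on hle (hhζ.intervalIntegrable_of_mem_Icc hτ hτ')
      ((hh_int.intervalIntegrable_of_mem_Icc hτ hτ').mul_const _) fun σ hσ =>
        mul_le_mul_of_nonneg_left ((hζg σ (hsub hσ)).trans (hg_le σ hσ)) (hh_nonneg σ (hsub hσ))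
  rw [intervalIntegral.integral_mul_const] at hbound
  linarith [hg τ hτ τ' hτ']

theorem backward_gronwall (s t : ℝ) (hst : s < t) (h ζ : ℝ → ℝ)
    (hh_int : IntegrableOn h (Set.Icc s t))
    (hh_nonneg : ∀ σ ∈ Set.Icc s t, 0 ≤ h σ)
    (hζ_cont : ContinuousOn ζ (Set.Icc s t))
    (hζ_nonneg : ∀ σ ∈ Set.Icc s t, 0 ≤ ζ σ)
    (hineq : ∀ τ ∈ Set.Icc s t, ζ t - ζ τ ≥ -∫ σ in τ..t, h σ * ζ σ) :
    ζ s ≤ Real.exp (∫ σ in s..t, h σ) * ζ t := by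
  have hhζ : IntegrableOn (fun σ => h σ * ζ σ) (Icc s t) :=
    hh_int.mul_continuousOn hζ_cont isCompact_Icc
  let g τ := ζ t + ∫ σ in τ..t, h σ * ζ σ
  have hζg : ∀ τ ∈ Icc s t, ζ τ ≤ g τ := fun τ hτ => by linarith [hineq τ hτ]
  have hg_sub : ∀ τ ∈ Icc s t, ∀ τ' ∈ Icc s t, g τ - g τ' = ∫ σ in τ..τ', h σ * ζ σ :=
    fun τ hτ τ' hτ' => by
      have := integral_add_adjacent_intervals (hhζ.intervalIntegrable_of_mem_Icc hτ hτ')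
        (hhζ.intervalIntegrable_of_mem_Icc hτ' (right_mem_Icc.2 hst.le))
      simp only [g]; linarith
  have hg : ContinuousOn g (Icc s t) := continuousOn_const.add <| by
    rw [← uIcc_of_le hst.le] at hhζ ⊢
    exact continuousOn_primitive_interval_left hhζ
  calc ζ s ≤ g s := hζg s (left_mem_Icc.2 hst.le)
    _ ≤ exp (∫ σ in s..t, h σ) * g t :=
      le_exp_integral_mul_of_le_add_integral_mul hst.le hh_int hh_nonneg hg
        (fun τ hτ => (hζ_nonneg τ hτ).trans (hζg τ hτ)) fun _ hτ _ hτ' hle =>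
          le_add_integral_mul_of_sub_eq_integral hh_int hhζ hh_nonneg hζ_nonneg hζg hg_sub
            hτ hτ' hle
    _ = exp (∫ σ in s..t, h σ) * ζ t := by simp [g]
end
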